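/- Let L > 0, τ, ε, η₁, η₂ ∈ ℝ, and let u, v : ℝ² → ℝ be smooth (C^∞) and L-periodic. Then the function φ(s) = E_FCH(u + s·v) is differentiable at s = 0 with φ′(0) = ∫_Ω [ε²Δ(ε²Δu − F′(u)) − F″(u)·(ε²Δu − F′(u)) + ε²η₁Δu − η₂F′(u)]·v dx. -/

import Mathlib

open MeasureTheory

noncomputable section

/-- The box `Ω = [0,L]²` in `ℝ²` (modeled as `ℝ × ℝ`). -/
def box (L : ℝ) : Set (ℝ × ℝ) := Set.Icc (0 : ℝ) L ×ˢ Set.Icc (0 : ℝ) L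

/-- `f : ℝ² → ℝ` is `L`-periodic: periodic with period `L` in each coordinate direction. -/
def IsPeriodic (L : ℝ) (f : ℝ × ℝ → ℝ) : Prop :=
  ∀ x : ℝ × ℝ, f (x.1 + L, x.2) = f x ∧ f (x.1, x.2 + L) = f x

/-- First partial derivative `∂f/∂x₁`. -/
def pd1 (f : ℝ × ℝ → ℝ) (x : ℝ × ℝ) : ℝ := fderiv ℝ f x (1, 0)

/-- Second partial derivative `∂f/∂x₂`. -/
def pd2 (f : ℝ × ℝ → ℝ) (x : ℝ × ℝ) : ℝ := fderiv ℝ f x (0, 1)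

/-- The Laplacian `Δf = ∂²f/∂x₁² + ∂²f/∂x₂²`. -/
def lap (f : ℝ × ℝ → ℝ) (x : ℝ × ℝ) : ℝ := pd1 (pd1 f) x + pd2 (pd2 f) x

/-- The squared gradient `|∇f|² = (∂f/∂x₁)² + (∂f/∂x₂)²`. -/
def gradSq (f : ℝ × ℝ → ℝ) (x : ℝ × ℝ) : ℝ := (pd1 f x) ^ 2 + (pd2 f x) ^ 2

/-- The double-well potential `F(ζ) = ½(ζ+1)²(½(ζ−1)² + (2/3)τ(ζ−2))`. -/
def F (τ : ℝ) (ζ : ℝ) : ℝ := (1/2) * (ζ + 1) ^ 2 * ((1/2) * (ζ - 1) ^ 2 + (2/3) * τ * (ζ - 2))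

/-- The FCH free energy
`E_FCH(u) = ∫_Ω [½(ε²Δu − F′(u))² − (ε²/2)η₁|∇u|² − η₂F(u)] dx`. -/
def EFCH (L τ ε η₁ η₂ : ℝ) (u : ℝ × ℝ → ℝ) : ℝ :=
  ∫ x in box L,
    ((1/2) * (ε ^ 2 * lap u x - deriv (F τ) (u x)) ^ 2
      - (ε ^ 2 / 2) * η₁ * gradSq u x - η₂ * F τ (u x))


lemma contDiff_pd1 {f : ℝ × ℝ → ℝ} (hf : ContDiff ℝ (⊤ : ℕ∞) f) : ContDiff ℝ (⊤ : ℕ∞) (pd1 f) :=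
  (hf.fderiv_right (by simp)).clm_apply contDiff_const

lemma contDiff_pd2 {f : ℝ × ℝ → ℝ} (hf : ContDiff ℝ (⊤ : ℕ∞) f) : ContDiff ℝ (⊤ : ℕ∞) (pd2 f) :=
  (hf.fderiv_right (by simp)).clm_apply contDiff_const

lemma fderiv_shift {f : ℝ × ℝ → ℝ} (hf : Differentiable ℝ f) (c : ℝ × ℝ)
    (hc : ∀ y, f (y + c) = f y) (x : ℝ × ℝ) : fderiv ℝ f (x + c) = fderiv ℝ f x := by
  have h1 : HasFDerivAt (fun y => f (y + c)) (fderiv ℝ f (x + c)) x := by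
    simpa [Function.comp_def] using (hf (x + c)).hasFDerivAt.comp x ((hasFDerivAt_id x).add_const c)
  rw [funext hc] at h1
  exact (h1.fderiv).symm

lemma add_L0 (x : ℝ × ℝ) (L : ℝ) : x + (L, 0) = (x.1 + L, x.2) := by
  ext <;> simp

lemma add_0L (x : ℝ × ℝ) (L : ℝ) : x + (0, L) = (x.1, x.2 + L) := by
  ext <;> simp


lemma IsPeriodic.shift1 {L : ℝ} {f : ℝ × ℝ → ℝ} (h : IsPeriodic L f) (y : ℝ × ℝ) :
    f (y + (L, 0)) = f y := by
  rw [add_L0]; exact (h y).1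

lemma IsPeriodic.shift2 {L : ℝ} {f : ℝ × ℝ → ℝ} (h : IsPeriodic L f) (y : ℝ × ℝ) :
    f (y + (0, L)) = f y := by
  rw [add_0L]; exact (h y).2

lemma isPeriodic_pd1 {L : ℝ} {f : ℝ × ℝ → ℝ} (hf : ContDiff ℝ (⊤ : ℕ∞) f) (hp : IsPeriodic L f) :
    IsPeriodic L (pd1 f) := by
  intro x
  constructor
  · have : fderiv ℝ f (x + (L, 0)) = fderiv ℝ f x :=
      fderiv_shift (hf.differentiable (by simp)) _ hp.shift1 x
    rw [add_L0] at this
    simpa [pd1] using congrArg (fun (T : ℝ × ℝ →L[ℝ] ℝ) => T (1, 0)) this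
  · have : fderiv ℝ f (x + (0, L)) = fderiv ℝ f x :=
      fderiv_shift (hf.differentiable (by simp)) _ hp.shift2 x
    rw [add_0L] at this
    simpa [pd1] using congrArg (fun (T : ℝ × ℝ →L[ℝ] ℝ) => T (1, 0)) this

lemma isPeriodic_pd2 {L : ℝ} {f : ℝ × ℝ → ℝ} (hf : ContDiff ℝ (⊤ : ℕ∞) f) (hp : IsPeriodic L f) :
    IsPeriodic L (pd2 f) := by
  intro x
  constructor
  · have : fderiv ℝ f (x + (L, 0)) = fderiv ℝ f x :=
      fderiv_shift (hf.differentiable (by simp)) _ hp.shift1 x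
    rw [add_L0] at this
    simpa [pd2] using congrArg (fun (T : ℝ × ℝ →L[ℝ] ℝ) => T (0, 1)) this
  · have : fderiv ℝ f (x + (0, L)) = fderiv ℝ f x :=
      fderiv_shift (hf.differentiable (by simp)) _ hp.shift2 x
    rw [add_0L] at this
    simpa [pd2] using congrArg (fun (T : ℝ × ℝ →L[ℝ] ℝ) => T (0, 1)) this

lemma hasDerivAt_slice1 {f : ℝ × ℝ → ℝ} (hf : Differentiable ℝ f) (y t : ℝ) :
    HasDerivAt (fun r => f (r, y)) (pd1 f (t, y)) t := by
  have h := (hf (t, y)).hasFDerivAt.comp_hasDerivAt t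
    ((hasDerivAt_id t).prodMk (hasDerivAt_const t y))
  simpa [pd1, Function.comp_def] using h

lemma hasDerivAt_slice2 {f : ℝ × ℝ → ℝ} (hf : Differentiable ℝ f) (x t : ℝ) :
    HasDerivAt (fun r => f (x, r)) (pd2 f (x, t)) t := by
  have h := (hf (x, t)).hasFDerivAt.comp_hasDerivAt t
    ((hasDerivAt_const t x).prodMk (hasDerivAt_id t))
  simpa [pd2, Function.comp_def] using h

lemma pd1_add_smul {u v : ℝ × ℝ → ℝ} (hu : Differentiable ℝ u) (hv : Differentiable ℝ v)
    (s : ℝ) : pd1 (fun x => u x + s * v x) = fun x => pd1 u x + s * pd1 v x := by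
  funext x
  have h2 : DifferentiableAt ℝ (fun y => s * v y) x := (hv x).const_mul s
  simp [pd1, fderiv_fun_add (hu x) h2, fderiv_const_mul (hv x) s]

lemma pd2_add_smul {u v : ℝ × ℝ → ℝ} (hu : Differentiable ℝ u) (hv : Differentiable ℝ v)
    (s : ℝ) : pd2 (fun x => u x + s * v x) = fun x => pd2 u x + s * pd2 v x := by
  funext x
  have h2 : DifferentiableAt ℝ (fun y => s * v y) x := (hv x).const_mul s
  simp [pd2, fderiv_fun_add (hu x) h2, fderiv_const_mul (hv x) s]
lemma ibp_1d {L : ℝ} (hL : 0 < L) {φ ψ φ' ψ' : ℝ → ℝ}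
    (hφ : ∀ t, HasDerivAt φ (φ' t) t) (hψ : ∀ t, HasDerivAt ψ (ψ' t) t)
    (hcφ : Continuous φ) (hcψ : Continuous ψ) (hcφ' : Continuous φ') (hcψ' : Continuous ψ')
    (hper : φ L * ψ L = φ 0 * ψ 0) :
    ∫ t in Set.Icc (0:ℝ) L, φ' t * ψ t = - ∫ t in Set.Icc (0:ℝ) L, φ t * ψ' t := by
  have h := intervalIntegral.integral_deriv_mul_eq_sub (a := 0) (b := L)
    (fun x _ => hφ x) (fun x _ => hψ x)
    (hcφ'.intervalIntegrable 0 L) (hcψ'.intervalIntegrable 0 L)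
  rw [intervalIntegral.integral_add (f := fun x => φ' x * ψ x) (g := fun x => φ x * ψ' x) ((hcφ'.mul hcψ).intervalIntegrable 0 L)
    ((hcφ.mul hcψ').intervalIntegrable 0 L), hper, sub_self] at h
  have e1 : ∫ t in Set.Icc (0:ℝ) L, φ' t * ψ t = ∫ t in (0:ℝ)..L, φ' t * ψ t := by
    rw [intervalIntegral.integral_of_le hL.le, integral_Icc_eq_integral_Ioc]
  have e2 : ∫ t in Set.Icc (0:ℝ) L, φ t * ψ' t = ∫ t in (0:ℝ)..L, φ t * ψ' t := by
    rw [intervalIntegral.integral_of_le hL.le, integral_Icc_eq_integral_Ioc]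
  rw [e1, e2]; linarith


lemma integrableOn_box {L : ℝ} {h : ℝ × ℝ → ℝ} (hc : Continuous h) :
    IntegrableOn h (box L) := by
  exact hc.continuousOn.integrableOn_compact (isCompact_Icc.prod isCompact_Icc)

lemma box_fubini1 {L : ℝ} {h : ℝ × ℝ → ℝ} (hc : Continuous h) :
    ∫ z in box L, h z = ∫ y in Set.Icc (0:ℝ) L, ∫ t in Set.Icc (0:ℝ) L, h (t, y) := by
  have hi : IntegrableOn h (box L) := integrableOn_box hc
  rw [box] at hi ⊢
  rw [Measure.volume_eq_prod] at hi ⊢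
  simp only [← Measure.prod_restrict, IntegrableOn] at hi ⊢
  exact integral_prod_symm h hi

lemma box_fubini2 {L : ℝ} {h : ℝ × ℝ → ℝ} (hc : Continuous h) :
    ∫ z in box L, h z = ∫ x in Set.Icc (0:ℝ) L, ∫ t in Set.Icc (0:ℝ) L, h (x, t) := by
  have hi : IntegrableOn h (box L) := integrableOn_box hc
  rw [box] at hi ⊢
  rw [Measure.volume_eq_prod] at hi ⊢
  simp only [← Measure.prod_restrict, IntegrableOn] at hi ⊢
  exact integral_prod h hi
lemma ibp1 {L : ℝ} (hL : 0 < L) {f g : ℝ × ℝ → ℝ}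
    (hf : ContDiff ℝ (⊤ : ℕ∞) f) (hg : ContDiff ℝ (⊤ : ℕ∞) g)
    (hfp : IsPeriodic L f) (hgp : IsPeriodic L g) :
    ∫ x in box L, pd1 f x * g x = - ∫ x in box L, f x * pd1 g x := by
  have hcf := hf.continuous
  have hcg := hg.continuous
  have hc1f : Continuous (pd1 f) := (contDiff_pd1 hf).continuous
  have hc1g : Continuous (pd1 g) := (contDiff_pd1 hg).continuous
  rw [box_fubini1 (h := fun x => pd1 f x * g x) (hc1f.mul hcg), box_fubini1 (h := fun x => f x * pd1 g x) (hcf.mul hc1g), ← integral_neg]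
  refine integral_congr_ae (Filter.Eventually.of_forall fun y => ?_)
  have key := ibp_1d hL (φ := fun t => f (t, y)) (ψ := fun t => g (t, y))
    (φ' := fun t => pd1 f (t, y)) (ψ' := fun t => pd1 g (t, y))
    (fun t => hasDerivAt_slice1 (hf.differentiable (by simp)) y t)
    (fun t => hasDerivAt_slice1 (hg.differentiable (by simp)) y t)
    (hcf.comp (continuous_id.prodMk continuous_const))
    (hcg.comp (continuous_id.prodMk continuous_const))
    (hc1f.comp (continuous_id.prodMk continuous_const))
    (hc1g.comp (continuous_id.prodMk continuous_const))
    (by have h1 := (hfp (0, y)).1; have h2 := (hgp (0, y)).1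
        simp only [zero_add] at h1 h2; simp only [h1, h2])
  exact key

lemma ibp2 {L : ℝ} (hL : 0 < L) {f g : ℝ × ℝ → ℝ}
    (hf : ContDiff ℝ (⊤ : ℕ∞) f) (hg : ContDiff ℝ (⊤ : ℕ∞) g)
    (hfp : IsPeriodic L f) (hgp : IsPeriodic L g) :
    ∫ x in box L, pd2 f x * g x = - ∫ x in box L, f x * pd2 g x := by
  have hcf := hf.continuous
  have hcg := hg.continuous
  have hc2f : Continuous (pd2 f) := (contDiff_pd2 hf).continuous
  have hc2g : Continuous (pd2 g) := (contDiff_pd2 hg).continuous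
  rw [box_fubini2 (h := fun x => pd2 f x * g x) (hc2f.mul hcg), box_fubini2 (h := fun x => f x * pd2 g x) (hcf.mul hc2g), ← integral_neg]
  refine integral_congr_ae (Filter.Eventually.of_forall fun x => ?_)
  have key := ibp_1d hL (φ := fun t => f (x, t)) (ψ := fun t => g (x, t))
    (φ' := fun t => pd2 f (x, t)) (ψ' := fun t => pd2 g (x, t))
    (fun t => hasDerivAt_slice2 (hf.differentiable (by simp)) x t)
    (fun t => hasDerivAt_slice2 (hg.differentiable (by simp)) x t)
    (hcf.comp (continuous_const.prodMk continuous_id))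
    (hcg.comp (continuous_const.prodMk continuous_id))
    (hc2f.comp (continuous_const.prodMk continuous_id))
    (hc2g.comp (continuous_const.prodMk continuous_id))
    (by have h1 := (hfp (x, 0)).2; have h2 := (hgp (x, 0)).2
        simp only [zero_add] at h1 h2; simp only [h1, h2])
  exact key


lemma contDiff_lap {f : ℝ × ℝ → ℝ} (hf : ContDiff ℝ (⊤ : ℕ∞) f) : ContDiff ℝ (⊤ : ℕ∞) (lap f) :=
  (contDiff_pd1 (contDiff_pd1 hf)).add (contDiff_pd2 (contDiff_pd2 hf))

lemma isPeriodic_lap {L : ℝ} {f : ℝ × ℝ → ℝ} (hf : ContDiff ℝ (⊤ : ℕ∞) f) (hp : IsPeriodic L f) :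
    IsPeriodic L (lap f) := by
  intro x
  have h1 := isPeriodic_pd1 (contDiff_pd1 hf) (isPeriodic_pd1 hf hp) x
  have h2 := isPeriodic_pd2 (contDiff_pd2 hf) (isPeriodic_pd2 hf hp) x
  exact ⟨by simp only [lap, h1.1, h2.1], by simp only [lap, h1.2, h2.2]⟩

lemma ibp_lap {L : ℝ} (hL : 0 < L) {f g : ℝ × ℝ → ℝ}
    (hf : ContDiff ℝ (⊤ : ℕ∞) f) (hg : ContDiff ℝ (⊤ : ℕ∞) g)
    (hfp : IsPeriodic L f) (hgp : IsPeriodic L g) :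
    ∫ x in box L, lap f x * g x = ∫ x in box L, f x * lap g x := by
  have e1 : ∫ x in box L, lap f x * g x
      = (∫ x in box L, pd1 (pd1 f) x * g x) + ∫ x in box L, pd2 (pd2 f) x * g x := by
    rw [← integral_add
      (integrableOn_box (h := fun x => pd1 (pd1 f) x * g x) ((contDiff_pd1 (contDiff_pd1 hf)).continuous.mul hg.continuous))
      (integrableOn_box (h := fun x => pd2 (pd2 f) x * g x) ((contDiff_pd2 (contDiff_pd2 hf)).continuous.mul hg.continuous))]
    refine integral_congr_ae (Filter.Eventually.of_forall fun x => ?_)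
    simp [lap]; ring
  have e2 : ∫ x in box L, f x * lap g x
      = (∫ x in box L, f x * pd1 (pd1 g) x) + ∫ x in box L, f x * pd2 (pd2 g) x := by
    rw [← integral_add
      (integrableOn_box (h := fun x => f x * pd1 (pd1 g) x) (hf.continuous.mul (contDiff_pd1 (contDiff_pd1 hg)).continuous))
      (integrableOn_box (h := fun x => f x * pd2 (pd2 g) x) (hf.continuous.mul (contDiff_pd2 (contDiff_pd2 hg)).continuous))]
    refine integral_congr_ae (Filter.Eventually.of_forall fun x => ?_)
    simp [lap]; ring
  have h1 := ibp1 hL (contDiff_pd1 hf) hg (isPeriodic_pd1 hf hfp) hgp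
  have h1' := ibp1 hL hf (contDiff_pd1 hg) hfp (isPeriodic_pd1 hg hgp)
  have h2 := ibp2 hL (contDiff_pd2 hf) hg (isPeriodic_pd2 hf hfp) hgp
  have h2' := ibp2 hL hf (contDiff_pd2 hg) hfp (isPeriodic_pd2 hg hgp)
  rw [e1, e2]; linarith

lemma ibp_grad {L : ℝ} (hL : 0 < L) {f g : ℝ × ℝ → ℝ}
    (hf : ContDiff ℝ (⊤ : ℕ∞) f) (hg : ContDiff ℝ (⊤ : ℕ∞) g)
    (hfp : IsPeriodic L f) (hgp : IsPeriodic L g) :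
    ∫ x in box L, (pd1 f x * pd1 g x + pd2 f x * pd2 g x)
      = - ∫ x in box L, lap f x * g x := by
  have e1 : ∫ x in box L, (pd1 f x * pd1 g x + pd2 f x * pd2 g x)
      = (∫ x in box L, pd1 f x * pd1 g x) + ∫ x in box L, pd2 f x * pd2 g x :=
    integral_add
      (integrableOn_box ((contDiff_pd1 hf).continuous.mul (contDiff_pd1 hg).continuous))
      (integrableOn_box ((contDiff_pd2 hf).continuous.mul (contDiff_pd2 hg).continuous))
  have e2 : ∫ x in box L, lap f x * g x
      = (∫ x in box L, pd1 (pd1 f) x * g x) + ∫ x in box L, pd2 (pd2 f) x * g x := by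
    rw [← integral_add
      (integrableOn_box (h := fun x => pd1 (pd1 f) x * g x) ((contDiff_pd1 (contDiff_pd1 hf)).continuous.mul hg.continuous))
      (integrableOn_box (h := fun x => pd2 (pd2 f) x * g x) ((contDiff_pd2 (contDiff_pd2 hf)).continuous.mul hg.continuous))]
    refine integral_congr_ae (Filter.Eventually.of_forall fun x => ?_)
    simp [lap]; ring
  have h1 := ibp1 hL (contDiff_pd1 hf) hg (isPeriodic_pd1 hf hfp) hgp
  have h2 := ibp2 hL (contDiff_pd2 hf) hg (isPeriodic_pd2 hf hfp) hgp
  rw [e1, e2]; linarith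

def F1 (τ ζ : ℝ) : ℝ :=
  (ζ + 1) * ((1/2) * (ζ - 1) ^ 2 + (2/3) * τ * (ζ - 2)) + (1/2) * (ζ + 1) ^ 2 * ((ζ - 1) + (2/3) * τ)

def F2 (τ ζ : ℝ) : ℝ :=
  ((1/2) * (ζ - 1) ^ 2 + (2/3) * τ * (ζ - 2)) + (ζ + 1) * ((ζ - 1) + (2/3) * τ)
    + ((ζ + 1) * ((ζ - 1) + (2/3) * τ) + (1/2) * (ζ + 1) ^ 2)

lemma hasDerivAt_F (τ ζ : ℝ) : HasDerivAt (F τ) (F1 τ ζ) ζ := by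
  have h1 : HasDerivAt (fun z : ℝ => (1/2) * (z + 1) ^ 2)
      ((1/2) * (↑2 * (ζ + 1) ^ 1 * 1)) ζ := (((hasDerivAt_id ζ).add_const 1).pow 2).const_mul (1/2)
  have h2 : HasDerivAt (fun z : ℝ => (1/2) * (z - 1) ^ 2 + (2/3) * τ * (z - 2))
      ((1/2) * (↑2 * (ζ - 1) ^ 1 * 1) + (2/3) * τ * 1) ζ :=
    ((((hasDerivAt_id ζ).sub_const 1).pow 2).const_mul (1/2)).add
      (((hasDerivAt_id ζ).sub_const 2).const_mul ((2/3) * τ))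
  have h := h1.mul h2
  refine h.congr_deriv ?_
  unfold F1
  push_cast
  ring

lemma hasDerivAt_F1 (τ ζ : ℝ) : HasDerivAt (F1 τ) (F2 τ ζ) ζ := by
  have h2 : HasDerivAt (fun z : ℝ => (1/2) * (z - 1) ^ 2 + (2/3) * τ * (z - 2))
      ((1/2) * (↑2 * (ζ - 1) ^ 1 * 1) + (2/3) * τ * 1) ζ :=
    ((((hasDerivAt_id ζ).sub_const 1).pow 2).const_mul (1/2)).add
      (((hasDerivAt_id ζ).sub_const 2).const_mul ((2/3) * τ))
  have ha : HasDerivAt (fun z : ℝ => (z + 1) * ((1/2) * (z - 1) ^ 2 + (2/3) * τ * (z - 2)))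
      (1 * ((1/2) * (ζ - 1) ^ 2 + (2/3) * τ * (ζ - 2))
        + (ζ + 1) * ((1/2) * (↑2 * (ζ - 1) ^ 1 * 1) + (2/3) * τ * 1)) ζ :=
    ((hasDerivAt_id ζ).add_const 1).mul h2
  have h1 : HasDerivAt (fun z : ℝ => (1/2) * (z + 1) ^ 2)
      ((1/2) * (↑2 * (ζ + 1) ^ 1 * 1)) ζ := (((hasDerivAt_id ζ).add_const 1).pow 2).const_mul (1/2)
  have h3 : HasDerivAt (fun z : ℝ => (z - 1) + (2/3) * τ) 1 ζ :=
    ((hasDerivAt_id ζ).sub_const 1).add_const ((2/3) * τ)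
  have hb := h1.mul h3
  have h := ha.add hb
  refine h.congr_deriv ?_
  unfold F2
  push_cast
  ring

lemma deriv_F (τ : ℝ) : deriv (F τ) = F1 τ := funext fun ζ => (hasDerivAt_F τ ζ).deriv

lemma deriv_F1 (τ : ℝ) : deriv (F1 τ) = F2 τ :=
  funext fun ζ => (hasDerivAt_F1 τ ζ).deriv

lemma deriv_deriv_F (τ : ℝ) : deriv (deriv (F τ)) = F2 τ := by
  rw [deriv_F]; exact funext fun ζ => (hasDerivAt_F1 τ ζ).deriv

lemma contDiff_F1 (τ : ℝ) : ContDiff ℝ (⊤ : ℕ∞) (F1 τ) := by unfold F1; fun_prop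

lemma contDiff_F2 (τ : ℝ) : ContDiff ℝ (⊤ : ℕ∞) (F2 τ) := by unfold F2; fun_prop
def c0e (τ ε η₁ η₂ a b Lu Lv p1u p1v p2u p2v : ℝ) : ℝ :=
  (1/2) * (ε^2*Lu - F1 τ a)^2 - (ε^2/2)*η₁*(p1u^2 + p2u^2) - η₂ * F τ a

def c1e (τ ε η₁ η₂ a b Lu Lv p1u p1v p2u p2v : ℝ) : ℝ :=
  (ε^2*Lu - F1 τ a) * (ε^2*Lv - F2 τ a * b) - ε^2*η₁*(p1u*p1v + p2u*p2v) - η₂ * (F1 τ a * b)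
def c2e (τ ε η₁ η₂ a b Lu Lv p1u p1v p2u p2v : ℝ) : ℝ :=
  (-1/2 : ℝ) * p2v^2 * ε^2 * η₁ + (-1/2 : ℝ) * p1v^2 * ε^2 * η₁ + (1/2 : ℝ) * Lv^2 * ε^4 + (1 : ℝ) * b * Lv * ε^2 + (1/2 : ℝ) * b^2 + (1/2 : ℝ) * b^2 * η₂ + (-3 : ℝ) * a * b^2 * Lu * ε^2 + (-3 : ℝ) * a^2 * b * Lv * ε^2 + (-6 : ℝ) * a^2 * b^2 + (-3/2 : ℝ) * a^2 * b^2 * η₂ + (15/2 : ℝ) * a^4 * b^2 + (-1 : ℝ) * τ * b^2 * Lu * ε^2 + (-2 : ℝ) * τ * a * b * Lv * ε^2 + (-6 : ℝ) * τ * a * b^2 + (-1 : ℝ) * τ * a * b^2 * η₂ + (10 : ℝ) * τ * a^3 * b^2 + (-1 : ℝ) * τ^2 * b^2 + (3 : ℝ) * τ^2 * a^2 * b^2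

def c3e (τ ε η₁ η₂ a b Lu Lv p1u p1v p2u p2v : ℝ) : ℝ :=
  (-1 : ℝ) * b^3 * Lu * ε^2 + (-3 : ℝ) * a * b^2 * Lv * ε^2 + (-4 : ℝ) * a * b^3 + (-1 : ℝ) * a * b^3 * η₂ + (10 : ℝ) * a^3 * b^3 + (-1 : ℝ) * τ * b^2 * Lv * ε^2 + (-2 : ℝ) * τ * b^3 + (-1/3 : ℝ) * τ * b^3 * η₂ + (10 : ℝ) * τ * a^2 * b^3 + (2 : ℝ) * τ^2 * a * b^3

def c4e (τ ε η₁ η₂ a b Lu Lv p1u p1v p2u p2v : ℝ) : ℝ :=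
  (-1 : ℝ) * b^3 * Lv * ε^2 + (-1 : ℝ) * b^4 + (-1/4 : ℝ) * b^4 * η₂ + (15/2 : ℝ) * a^2 * b^4 + (5 : ℝ) * τ * a * b^4 + (1/2 : ℝ) * τ^2 * b^4

def c5e (τ ε η₁ η₂ a b Lu Lv p1u p1v p2u p2v : ℝ) : ℝ :=
  (3 : ℝ) * a * b^5 + (1 : ℝ) * τ * b^5

def c6e (τ ε η₁ η₂ a b Lu Lv p1u p1v p2u p2v : ℝ) : ℝ :=
  (1/2 : ℝ) * b^6

lemma integrand_expand (τ ε η₁ η₂ s a b Lu Lv p1u p1v p2u p2v : ℝ) :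
    (1/2) * (ε^2*(Lu + s*Lv) - F1 τ (a + s*b))^2
      - (ε^2/2)*η₁*((p1u + s*p1v)^2 + (p2u + s*p2v)^2) - η₂ * F τ (a + s*b)
    = c0e τ ε η₁ η₂ a b Lu Lv p1u p1v p2u p2v
      + (s * c1e τ ε η₁ η₂ a b Lu Lv p1u p1v p2u p2v
      + (s^2 * c2e τ ε η₁ η₂ a b Lu Lv p1u p1v p2u p2v
      + (s^3 * c3e τ ε η₁ η₂ a b Lu Lv p1u p1v p2u p2v
      + (s^4 * c4e τ ε η₁ η₂ a b Lu Lv p1u p1v p2u p2v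
      + (s^5 * c5e τ ε η₁ η₂ a b Lu Lv p1u p1v p2u p2v
      + s^6 * c6e τ ε η₁ η₂ a b Lu Lv p1u p1v p2u p2v))))) := by
  unfold c0e c1e c2e c3e c4e c5e c6e F F1 F2; ring

def coefFn (ck : ℝ→ℝ→ℝ→ℝ→ℝ→ℝ→ℝ→ℝ→ℝ→ℝ→ℝ→ℝ→ℝ) (τ ε η₁ η₂ : ℝ) (u v : ℝ × ℝ → ℝ)
    (x : ℝ × ℝ) : ℝ :=
  ck τ ε η₁ η₂ (u x) (v x) (lap u x) (lap v x) (pd1 u x) (pd1 v x) (pd2 u x) (pd2 v x)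

/-- First variation of the FCH energy: `φ(s) = E_FCH(u + s v)` is differentiable at `0` with
`φ′(0) = ∫_Ω [ε²Δ(ε²Δu − F′(u)) − F″(u)(ε²Δu − F′(u)) + ε²η₁Δu − η₂F′(u)] v dx`. -/
theorem EFCH_first_variation
    (L : ℝ) (hL : 0 < L) (τ ε η₁ η₂ : ℝ) (u v : ℝ × ℝ → ℝ)
    (hu : ContDiff ℝ (⊤ : ℕ∞) u) (hv : ContDiff ℝ (⊤ : ℕ∞) v)
    (hup : IsPeriodic L u) (hvp : IsPeriodic L v) :
    HasDerivAt (fun s : ℝ => EFCH L τ ε η₁ η₂ (fun x => u x + s * v x))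
      (∫ x in box L,
        (ε ^ 2 * lap (fun y => ε ^ 2 * lap u y - deriv (F τ) (u y)) x
          - deriv (deriv (F τ)) (u x) * (ε ^ 2 * lap u x - deriv (F τ) (u x))
          + ε ^ 2 * η₁ * lap u x - η₂ * deriv (F τ) (u x)) * v x) 0 := by
  have hud := hu.differentiable (by simp)
  have hvd := hv.differentiable (by simp)
  have hp1u := contDiff_pd1 hu
  have hp2u := contDiff_pd2 hu
  have hp1v := contDiff_pd1 hv
  have hp2v := contDiff_pd2 hv
  have hlu := contDiff_lap hu
  have hlv := contDiff_lap hv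
  have hcu := hu.continuous
  have hcv := hv.continuous
  have hcp1u := hp1u.continuous
  have hcp2u := hp2u.continuous
  have hcp1v := hp1v.continuous
  have hcp2v := hp2v.continuous
  have hclu := hlu.continuous
  have hclv := hlv.continuous
  have hcF1u : Continuous (fun x => F1 τ (u x)) := ((contDiff_F1 τ).comp hu).continuous
  have hcF2u : Continuous (fun x => F2 τ (u x)) := ((contDiff_F2 τ).comp hu).continuous
  -- integrability of coefficient functions
  have hi0 : IntegrableOn (coefFn c0e τ ε η₁ η₂ u v) (box L) :=
    integrableOn_box (by unfold coefFn c0e F1 F; fun_prop)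
  have hi1 : IntegrableOn (coefFn c1e τ ε η₁ η₂ u v) (box L) :=
    integrableOn_box (by unfold coefFn c1e F1 F2; fun_prop)
  have hi2 : IntegrableOn (coefFn c2e τ ε η₁ η₂ u v) (box L) :=
    integrableOn_box (by unfold coefFn c2e; fun_prop)
  have hi3 : IntegrableOn (coefFn c3e τ ε η₁ η₂ u v) (box L) :=
    integrableOn_box (by unfold coefFn c3e; fun_prop)
  have hi4 : IntegrableOn (coefFn c4e τ ε η₁ η₂ u v) (box L) :=
    integrableOn_box (by unfold coefFn c4e; fun_prop)
  have hi5 : IntegrableOn (coefFn c5e τ ε η₁ η₂ u v) (box L) :=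
    integrableOn_box (by unfold coefFn c5e; fun_prop)
  have hi6 : IntegrableOn (coefFn c6e τ ε η₁ η₂ u v) (box L) :=
    integrableOn_box (by unfold coefFn c6e; fun_prop)
  -- Step 1 : the energy along u + s v is an explicit polynomial in s
  have hkey : ∀ s : ℝ, EFCH L τ ε η₁ η₂ (fun x => u x + s * v x)
      = (∫ x in box L, coefFn c0e τ ε η₁ η₂ u v x)
        + (s * (∫ x in box L, coefFn c1e τ ε η₁ η₂ u v x)
        + (s^2 * (∫ x in box L, coefFn c2e τ ε η₁ η₂ u v x)
        + (s^3 * (∫ x in box L, coefFn c3e τ ε η₁ η₂ u v x)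
        + (s^4 * (∫ x in box L, coefFn c4e τ ε η₁ η₂ u v x)
        + (s^5 * (∫ x in box L, coefFn c5e τ ε η₁ η₂ u v x)
        + s^6 * (∫ x in box L, coefFn c6e τ ε η₁ η₂ u v x)))))) := by
    intro s
    have e1 := pd1_add_smul hud hvd s
    have e2 := pd2_add_smul hud hvd s
    have e11 := pd1_add_smul (hp1u.differentiable (by simp)) (hp1v.differentiable (by simp)) s
    have e22 := pd2_add_smul (hp2u.differentiable (by simp)) (hp2v.differentiable (by simp)) s
    have hpt : EFCH L τ ε η₁ η₂ (fun x => u x + s * v x)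
        = ∫ x in box L, (coefFn c0e τ ε η₁ η₂ u v x
          + (s * coefFn c1e τ ε η₁ η₂ u v x
          + (s^2 * coefFn c2e τ ε η₁ η₂ u v x
          + (s^3 * coefFn c3e τ ε η₁ η₂ u v x
          + (s^4 * coefFn c4e τ ε η₁ η₂ u v x
          + (s^5 * coefFn c5e τ ε η₁ η₂ u v x
          + s^6 * coefFn c6e τ ε η₁ η₂ u v x)))))) := by
      unfold EFCH
      rw [deriv_F]
      refine integral_congr_ae (Filter.Eventually.of_forall fun x => ?_)
      simp only [coefFn, lap, gradSq, e1, e2, e11, e22]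
      unfold c0e c1e c2e c3e c4e c5e c6e F F1 F2
      ring
    have g1 : Integrable (fun x => s * coefFn c1e τ ε η₁ η₂ u v x) (volume.restrict (box L)) :=
      hi1.const_mul _
    have g2 : Integrable (fun x => s^2 * coefFn c2e τ ε η₁ η₂ u v x) (volume.restrict (box L)) :=
      hi2.const_mul _
    have g3 : Integrable (fun x => s^3 * coefFn c3e τ ε η₁ η₂ u v x) (volume.restrict (box L)) :=
      hi3.const_mul _
    have g4 : Integrable (fun x => s^4 * coefFn c4e τ ε η₁ η₂ u v x) (volume.restrict (box L)) :=
      hi4.const_mul _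
    have g5 : Integrable (fun x => s^5 * coefFn c5e τ ε η₁ η₂ u v x) (volume.restrict (box L)) :=
      hi5.const_mul _
    have g6 : Integrable (fun x => s^6 * coefFn c6e τ ε η₁ η₂ u v x) (volume.restrict (box L)) :=
      hi6.const_mul _
    have g56 : Integrable (fun x => s^5 * coefFn c5e τ ε η₁ η₂ u v x
        + s^6 * coefFn c6e τ ε η₁ η₂ u v x) (volume.restrict (box L)) := g5.add g6
    have g46 : Integrable (fun x => s^4 * coefFn c4e τ ε η₁ η₂ u v x
        + (s^5 * coefFn c5e τ ε η₁ η₂ u v x + s^6 * coefFn c6e τ ε η₁ η₂ u v x))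
        (volume.restrict (box L)) := g4.add g56
    have g36 : Integrable (fun x => s^3 * coefFn c3e τ ε η₁ η₂ u v x
        + (s^4 * coefFn c4e τ ε η₁ η₂ u v x + (s^5 * coefFn c5e τ ε η₁ η₂ u v x
        + s^6 * coefFn c6e τ ε η₁ η₂ u v x))) (volume.restrict (box L)) := g3.add g46
    have g26 : Integrable (fun x => s^2 * coefFn c2e τ ε η₁ η₂ u v x
        + (s^3 * coefFn c3e τ ε η₁ η₂ u v x + (s^4 * coefFn c4e τ ε η₁ η₂ u v x
        + (s^5 * coefFn c5e τ ε η₁ η₂ u v x + s^6 * coefFn c6e τ ε η₁ η₂ u v x))))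
        (volume.restrict (box L)) := g2.add g36
    have g16 : Integrable (fun x => s * coefFn c1e τ ε η₁ η₂ u v x
        + (s^2 * coefFn c2e τ ε η₁ η₂ u v x + (s^3 * coefFn c3e τ ε η₁ η₂ u v x
        + (s^4 * coefFn c4e τ ε η₁ η₂ u v x + (s^5 * coefFn c5e τ ε η₁ η₂ u v x
        + s^6 * coefFn c6e τ ε η₁ η₂ u v x))))) (volume.restrict (box L)) := g1.add g26
    rw [hpt, integral_add hi0 g16, integral_add g1 g26, integral_add g2 g36,
      integral_add g3 g46, integral_add g4 g56, integral_add g5 g6,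
      integral_const_mul, integral_const_mul, integral_const_mul, integral_const_mul,
      integral_const_mul, integral_const_mul]
  -- Step 2 : derivative of the polynomial at 0
  have d0 : HasDerivAt (fun s : ℝ =>
      (∫ x in box L, coefFn c0e τ ε η₁ η₂ u v x)
        + (s * (∫ x in box L, coefFn c1e τ ε η₁ η₂ u v x)
        + (s^2 * (∫ x in box L, coefFn c2e τ ε η₁ η₂ u v x)
        + (s^3 * (∫ x in box L, coefFn c3e τ ε η₁ η₂ u v x)
        + (s^4 * (∫ x in box L, coefFn c4e τ ε η₁ η₂ u v x)
        + (s^5 * (∫ x in box L, coefFn c5e τ ε η₁ η₂ u v x)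
        + s^6 * (∫ x in box L, coefFn c6e τ ε η₁ η₂ u v x)))))))
      (∫ x in box L, coefFn c1e τ ε η₁ η₂ u v x) 0 := by
    have h1 : HasDerivAt (fun s : ℝ => s * (∫ x in box L, coefFn c1e τ ε η₁ η₂ u v x))
        (∫ x in box L, coefFn c1e τ ε η₁ η₂ u v x) 0 := by
      simpa using (hasDerivAt_id (0:ℝ)).mul_const (∫ x in box L, coefFn c1e τ ε η₁ η₂ u v x)
    have h2 : HasDerivAt (fun s : ℝ => s^2 * (∫ x in box L, coefFn c2e τ ε η₁ η₂ u v x))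
        (0:ℝ) 0 := by
      have := (hasDerivAt_pow 2 (0:ℝ)).mul_const (∫ x in box L, coefFn c2e τ ε η₁ η₂ u v x)
      norm_num at this; exact this
    have h3 : HasDerivAt (fun s : ℝ => s^3 * (∫ x in box L, coefFn c3e τ ε η₁ η₂ u v x))
        (0:ℝ) 0 := by
      have := (hasDerivAt_pow 3 (0:ℝ)).mul_const (∫ x in box L, coefFn c3e τ ε η₁ η₂ u v x)
      norm_num at this; exact this
    have h4 : HasDerivAt (fun s : ℝ => s^4 * (∫ x in box L, coefFn c4e τ ε η₁ η₂ u v x))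
        (0:ℝ) 0 := by
      have := (hasDerivAt_pow 4 (0:ℝ)).mul_const (∫ x in box L, coefFn c4e τ ε η₁ η₂ u v x)
      norm_num at this; exact this
    have h5 : HasDerivAt (fun s : ℝ => s^5 * (∫ x in box L, coefFn c5e τ ε η₁ η₂ u v x))
        (0:ℝ) 0 := by
      have := (hasDerivAt_pow 5 (0:ℝ)).mul_const (∫ x in box L, coefFn c5e τ ε η₁ η₂ u v x)
      norm_num at this; exact this
    have h6 : HasDerivAt (fun s : ℝ => s^6 * (∫ x in box L, coefFn c6e τ ε η₁ η₂ u v x))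
        (0:ℝ) 0 := by
      have := (hasDerivAt_pow 6 (0:ℝ)).mul_const (∫ x in box L, coefFn c6e τ ε η₁ η₂ u v x)
      norm_num at this; exact this
    have := (hasDerivAt_const (0:ℝ)
        (∫ x in box L, coefFn c0e τ ε η₁ η₂ u v x)).add
      (h1.add (h2.add (h3.add (h4.add (h5.add h6)))))
    exact this.congr_deriv (by simp)
  -- Step 3 : integration by parts identifies the target value
  simp only [deriv_F, deriv_deriv_F, deriv_F1]
  have hW : ContDiff ℝ (⊤ : ℕ∞) (fun y => ε ^ 2 * lap u y - F1 τ (u y)) :=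
    (contDiff_const.mul hlu).sub ((contDiff_F1 τ).comp hu)
  have hWp : IsPeriodic L (fun y => ε ^ 2 * lap u y - F1 τ (u y)) := by
    intro x
    exact ⟨by simp only [(isPeriodic_lap hu hup x).1, (hup x).1],
           by simp only [(isPeriodic_lap hu hup x).2, (hup x).2]⟩
  have hcW : Continuous (fun y => ε ^ 2 * lap u y - F1 τ (u y)) := hW.continuous
  have hclW : Continuous (lap (fun y => ε ^ 2 * lap u y - F1 τ (u y))) := (contDiff_lap hW).continuous
  have hWlap : ∫ x in box L, lap (fun y => ε ^ 2 * lap u y - F1 τ (u y)) x * v x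
      = ∫ x in box L, (ε ^ 2 * lap u x - F1 τ (u x)) * lap v x :=
    ibp_lap hL hW hv hWp hvp
  have hgrad : ∫ x in box L, (pd1 u x * pd1 v x + pd2 u x * pd2 v x)
      = - ∫ x in box L, lap u x * v x := ibp_grad hL hu hv hup hvp
  have hA1 : (∫ x in box L, coefFn c1e τ ε η₁ η₂ u v x)
      = ε^2 * (∫ x in box L, (ε ^ 2 * lap u x - F1 τ (u x)) * lap v x)
        - (∫ x in box L, F2 τ (u x) * ((ε ^ 2 * lap u x - F1 τ (u x)) * v x))
        - ε^2*η₁ * (∫ x in box L, (pd1 u x * pd1 v x + pd2 u x * pd2 v x))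
        - η₂ * (∫ x in box L, F1 τ (u x) * v x) := by
    have hj1 : IntegrableOn (fun x => ε^2 * ((ε ^ 2 * lap u x - F1 τ (u x)) * lap v x)) (box L) :=
      integrableOn_box (by fun_prop)
    have hj2 : IntegrableOn (fun x => F2 τ (u x) * ((ε ^ 2 * lap u x - F1 τ (u x)) * v x)) (box L) :=
      integrableOn_box (by fun_prop)
    have hj3 : IntegrableOn (fun x => ε^2*η₁ * (pd1 u x * pd1 v x + pd2 u x * pd2 v x)) (box L) :=
      integrableOn_box (by fun_prop)
    have hj4 : IntegrableOn (fun x => η₂ * (F1 τ (u x) * v x)) (box L) :=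
      integrableOn_box (by fun_prop)
    rw [show (fun x => coefFn c1e τ ε η₁ η₂ u v x)
        = (fun x => ε^2 * ((ε ^ 2 * lap u x - F1 τ (u x)) * lap v x)
          - F2 τ (u x) * ((ε ^ 2 * lap u x - F1 τ (u x)) * v x)
          - ε^2*η₁ * (pd1 u x * pd1 v x + pd2 u x * pd2 v x)
          - η₂ * (F1 τ (u x) * v x))
      from funext fun x => by unfold coefFn c1e; ring]
    have k12 : Integrable (fun x => ε^2 * ((ε ^ 2 * lap u x - F1 τ (u x)) * lap v x)
        - F2 τ (u x) * ((ε ^ 2 * lap u x - F1 τ (u x)) * v x)) (volume.restrict (box L)) :=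
      hj1.sub hj2
    have k123 : Integrable (fun x => ε^2 * ((ε ^ 2 * lap u x - F1 τ (u x)) * lap v x)
        - F2 τ (u x) * ((ε ^ 2 * lap u x - F1 τ (u x)) * v x)
        - ε^2*η₁ * (pd1 u x * pd1 v x + pd2 u x * pd2 v x)) (volume.restrict (box L)) :=
      k12.sub hj3
    rw [integral_sub k123 hj4, integral_sub k12 hj3,
      integral_sub hj1 hj2, integral_const_mul, integral_const_mul, integral_const_mul]
  have hT : (∫ x in box L,
        (ε ^ 2 * lap (fun y => ε ^ 2 * lap u y - F1 τ (u y)) x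
          - F2 τ (u x) * (ε ^ 2 * lap u x - F1 τ (u x))
          + ε ^ 2 * η₁ * lap u x - η₂ * F1 τ (u x)) * v x)
      = ε^2 * (∫ x in box L, lap (fun y => ε ^ 2 * lap u y - F1 τ (u y)) x * v x)
        - (∫ x in box L, F2 τ (u x) * ((ε ^ 2 * lap u x - F1 τ (u x)) * v x))
        + ε^2*η₁ * (∫ x in box L, lap u x * v x)
        - η₂ * (∫ x in box L, F1 τ (u x) * v x) := by
    have hj1 : IntegrableOn
        (fun x => ε^2 * (lap (fun y => ε ^ 2 * lap u y - F1 τ (u y)) x * v x)) (box L) :=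
      integrableOn_box (by fun_prop)
    have hj2 : IntegrableOn (fun x => F2 τ (u x) * ((ε ^ 2 * lap u x - F1 τ (u x)) * v x)) (box L) :=
      integrableOn_box (by fun_prop)
    have hj3 : IntegrableOn (fun x => ε^2*η₁ * (lap u x * v x)) (box L) :=
      integrableOn_box (by fun_prop)
    have hj4 : IntegrableOn (fun x => η₂ * (F1 τ (u x) * v x)) (box L) :=
      integrableOn_box (by fun_prop)
    rw [show (fun x => (ε ^ 2 * lap (fun y => ε ^ 2 * lap u y - F1 τ (u y)) x
          - F2 τ (u x) * (ε ^ 2 * lap u x - F1 τ (u x))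
          + ε ^ 2 * η₁ * lap u x - η₂ * F1 τ (u x)) * v x)
        = (fun x => ε^2 * (lap (fun y => ε ^ 2 * lap u y - F1 τ (u y)) x * v x)
          - F2 τ (u x) * ((ε ^ 2 * lap u x - F1 τ (u x)) * v x)
          + ε^2*η₁ * (lap u x * v x)
          - η₂ * (F1 τ (u x) * v x))
      from funext fun x => by ring]
    have k12 : Integrable (fun x => ε^2 * (lap (fun y => ε ^ 2 * lap u y - F1 τ (u y)) x * v x)
        - F2 τ (u x) * ((ε ^ 2 * lap u x - F1 τ (u x)) * v x)) (volume.restrict (box L)) :=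
      hj1.sub hj2
    have k123 : Integrable (fun x => ε^2 * (lap (fun y => ε ^ 2 * lap u y - F1 τ (u y)) x * v x)
        - F2 τ (u x) * ((ε ^ 2 * lap u x - F1 τ (u x)) * v x)
        + ε^2*η₁ * (lap u x * v x)) (volume.restrict (box L)) := k12.add hj3
    rw [integral_sub k123 hj4, integral_add k12 hj3,
      integral_sub hj1 hj2, integral_const_mul, integral_const_mul, integral_const_mul]
  rw [show (fun s : ℝ => EFCH L τ ε η₁ η₂ (fun x => u x + s * v x))
      = _ from funext hkey]
  rw [hT]
  have : ε^2 * (∫ x in box L, lap (fun y => ε ^ 2 * lap u y - F1 τ (u y)) x * v x)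
        - (∫ x in box L, F2 τ (u x) * ((ε ^ 2 * lap u x - F1 τ (u x)) * v x))
        + ε^2*η₁ * (∫ x in box L, lap u x * v x)
        - η₂ * (∫ x in box L, F1 τ (u x) * v x)
      = ∫ x in box L, coefFn c1e τ ε η₁ η₂ u v x := by
    rw [hA1, hWlap, hgrad]; ring
  rw [this]
  exact d0
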